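/- For every permutation π of [n−1] with d descents, the permutation σ = 1 · π′ of [n] obtained by prepending 1 (where π′ is π with every entry increased by 1) satisfies des(σ) = d and w(σ) = w(π) + d. -/

import Mathlib

/-- Number of descents of a sequence. -/
def desL : List ℕ → ℕ
  | a :: b :: t => (if b < a then 1 else 0) + desL (b :: t)
  | _ => 0

/-- Repeatedly split a sequence just after its maximum element. -/
def splitLeftAux : ℕ → List ℕ → List (List ℕ)
  | 0, _ => []
  | _, [] => []
  | fuel + 1, l =>
    let i := l.idxOf (l.foldr Nat.max 0)
    l.take (i + 1) :: splitLeftAux fuel (l.drop (i + 1))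

def splitLeft (l : List ℕ) : List (List ℕ) := splitLeftAux l.length l

/-- Split a sequence at its minimum element, splitting the left part
repeatedly just after its maximum. -/
def splitAll (l : List ℕ) : List (List ℕ) :=
  let m := l.foldr Nat.min (l.headD 0)
  let i := l.idxOf m
  splitLeft (l.take i) ++ [[m]] ++ [l.drop (i + 1)]

/-- The weight of a sequence of distinct naturals (fuelled version; the fuel
`(length+2)^2` in `weightL` is more than the recursion depth ever needed). -/
def weightAux : ℕ → List ℕ → ℕ
  | 0, _ => 0
  | fuel + 1, l =>
    if l.length ≤ 1 ∨ l.Pairwise (· < ·) then 0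
    else ((splitAll (l ++ [l.foldr Nat.max 0 + 1])).map
      (fun p => desL p + weightAux fuel p)).sum

/-- The weight of a permutation viewed as a sequence. -/
def weightL (l : List ℕ) : ℕ := weightAux ((l.length + 2) ^ 2) l

/-- `l` is a permutation of `[n] = {1,…,n}` written as a sequence. -/
def IsPermList (n : ℕ) (l : List ℕ) : Prop := l.Perm (List.range' 1 n)

/-! Let `a` be no larger than any entry of `t`. Splitting `a · t · M`, where `M` is the new
maximum appended by the recursion, at its minimum leaves the pieces `[a]` and `t · M`, so
`w(a · t) = des(t · M) + w(t · M)`. Appending an increasing run of entries above all others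
changes neither the descents nor the weight: in every split such a run stays at the end of the
last piece, so the recursion computing `w(t · M)` runs in step with the one computing `w(t)`.
Hence `w(a · t) = w(t) + des(t)`; for `t = π'` it remains to note that shifting all entries by a
constant changes neither `des` nor `w`. -/

lemma List.pairwise_of_length_le_one {α : Type*} {R : α → α → Prop} {l : List α}
    (h : l.length ≤ 1) : l.Pairwise R := by
  rcases l with _ | ⟨a, _ | ⟨b, t⟩⟩ <;> simp_all

section FoldMinMax

lemma le_foldr_max {l : List ℕ} {x : ℕ} (hx : x ∈ l) : x ≤ l.foldr Nat.max 0 := by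
  induction l with
  | nil => simp at hx
  | cons a t ih =>
    rcases List.mem_cons.1 hx with rfl | hx
    · exact Nat.le_max_left _ _
    · exact (ih hx).trans (Nat.le_max_right _ _)

lemma lt_foldr_max_succ {l : List ℕ} {x : ℕ} (hx : x ∈ l) : x < l.foldr Nat.max 0 + 1 :=
  Nat.lt_succ_of_le (le_foldr_max hx)

lemma foldr_min_eq_of_forall_le {l : List ℕ} {a : ℕ} (h : ∀ x ∈ l, a ≤ x) :
    l.foldr Nat.min a = a := by
  induction l with
  | nil => rfl
  | cons b t ih =>
    simp only [List.forall_mem_cons] at h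
    rw [List.foldr_cons, ih h.2]
    exact Nat.min_eq_right h.1

lemma foldr_min_mem_cons (a : ℕ) (l : List ℕ) : l.foldr Nat.min a ∈ a :: l := by
  induction l with
  | nil => exact List.mem_cons_self
  | cons b t ih =>
    change min b (t.foldr Nat.min a) ∈ a :: b :: t
    rcases min_choice b (t.foldr Nat.min a) with h | h <;> rw [h]
    · simp
    · exact List.mem_cons.2 ((List.mem_cons.1 ih).imp_right (List.mem_cons_of_mem b))

lemma foldr_max_map_add (k : ℕ) {l : List ℕ} (hl : l ≠ []) :
    (l.map (· + k)).foldr Nat.max 0 = l.foldr Nat.max 0 + k := by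
  induction l with
  | nil => contradiction
  | cons a t ih =>
    by_cases ht : t = []
    · subst ht; simp
    · simp only [List.map_cons, List.foldr_cons, ih ht]
      exact Nat.add_max_add_right a _ k

lemma foldr_min_map_add (k a : ℕ) (l : List ℕ) :
    (l.map (· + k)).foldr Nat.min (a + k) = l.foldr Nat.min a + k := by
  rw [List.foldr_map]
  exact List.foldr_hom (· + k) fun x y => Nat.add_min_add_right x y k

lemma idxOf_map_of_injective {α β : Type*} [BEq α] [LawfulBEq α] [BEq β] [LawfulBEq β]
    {f : α → β} (hf : f.Injective) (a : α) (l : List α) :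
    (l.map f).idxOf (f a) = l.idxOf a := by
  simp only [List.idxOf, List.findIdx_map, Function.comp_def]
  congr 1
  funext x
  simp [hf.eq_iff]

end FoldMinMax

section Descents

lemma desL_append {l s : List ℕ} (h : ∀ x ∈ l, ∀ y ∈ s, x ≤ y) :
    desL (l ++ s) = desL l + desL s :=
  match l, s, h with
  | [], _, _ => by simp [desL]
  | [_], [], _ => rfl
  | [a], b :: s, h => by simp [desL, Nat.not_lt.2 (h a (by simp) b (by simp))]
  | a :: b :: l, s, h => by
    have ih := desL_append (l := b :: l) (s := s)
      fun x hx y hy => h x (List.mem_cons_of_mem _ hx) y hy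
    simp only [List.cons_append, desL] at ih ⊢
    omega

@[simp]
lemma desL_singleton (a : ℕ) : desL [a] = 0 := rfl

lemma desL_cons_of_forall_le {a : ℕ} {t : List ℕ} (h : ∀ y ∈ t, a ≤ y) :
    desL (a :: t) = desL t := by
  rw [← List.singleton_append, desL_append (by simpa using h), desL_singleton, zero_add]

lemma desL_eq_zero_of_sorted {l : List ℕ} (h : l.Pairwise (· < ·)) : desL l = 0 := by
  induction h with
  | nil => rfl
  | @cons a t hat _ ih => rw [desL_cons_of_forall_le fun y hy => (hat y hy).le, ih]

lemma desL_map_add (k : ℕ) : ∀ l : List ℕ, desL (l.map (· + k)) = desL l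
  | [] | [_] => rfl
  | a :: b :: t => by
    have ih := desL_map_add k (b :: t)
    simp only [List.map_cons, desL] at ih ⊢
    simp only [ih, Nat.add_lt_add_iff_right]

end Descents

section Splitting

def minEntry (l : List ℕ) : ℕ := l.foldr Nat.min (l.headD 0)

def minIndex (l : List ℕ) : ℕ := l.idxOf (minEntry l)

lemma splitAll_eq (l : List ℕ) :
    splitAll l = splitLeft (l.take (minIndex l)) ++ [[minEntry l]] ++ [l.drop (minIndex l + 1)] :=
  rfl

lemma minEntry_mem {l : List ℕ} (hl : l ≠ []) : minEntry l ∈ l := by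
  obtain ⟨a, t, rfl⟩ := List.exists_cons_of_ne_nil hl
  simpa [minEntry] using foldr_min_mem_cons a (a :: t)

lemma minIndex_lt_length {l : List ℕ} (hl : l ≠ []) : minIndex l < l.length :=
  List.idxOf_lt_length_iff.2 (minEntry_mem hl)

lemma splitLeftAux_succ {l : List ℕ} (hl : l ≠ []) (f : ℕ) :
    splitLeftAux (f + 1) l =
      l.take (l.idxOf (l.foldr Nat.max 0) + 1) ::
        splitLeftAux f (l.drop (l.idxOf (l.foldr Nat.max 0) + 1)) := by
  obtain ⟨a, t, rfl⟩ := List.exists_cons_of_ne_nil hl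
  rfl

lemma length_le_of_mem_splitLeftAux {f : ℕ} {l p : List ℕ} (hp : p ∈ splitLeftAux f l) :
    p.length ≤ l.length := by
  induction f generalizing l with
  | zero => simp [splitLeftAux] at hp
  | succ f ih =>
    rcases eq_or_ne l [] with rfl | hl
    · simp [splitLeftAux] at hp
    rw [splitLeftAux_succ hl, List.mem_cons] at hp
    rcases hp with rfl | hp
    · rw [List.length_take]; omega
    · exact (ih hp).trans (by rw [List.length_drop]; omega)

lemma length_lt_of_mem_splitLeft_append_minEntry {l p : List ℕ} (hl : 2 ≤ l.length)
    (hp : p ∈ splitLeft (l.take (minIndex l)) ++ [[minEntry l]]) : p.length < l.length := by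
  rcases List.mem_append.1 hp with hp | hp
  · have := minIndex_lt_length (List.ne_nil_of_length_pos (by omega : 0 < l.length))
    exact (length_le_of_mem_splitLeftAux hp).trans_lt (by rw [List.length_take]; omega)
  · rw [List.mem_singleton.1 hp, List.length_singleton]; omega

lemma splitAll_append {l t : List ℕ} (hl : l ≠ []) (hlt : ∀ x ∈ l, ∀ y ∈ t, x ≤ y) :
    splitAll (l ++ t) =
      splitLeft (l.take (minIndex l)) ++ [[minEntry l]] ++ [l.drop (minIndex l + 1) ++ t] := by
  have hmin : minEntry (l ++ t) = minEntry l := by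
    obtain ⟨a, l, rfl⟩ := List.exists_cons_of_ne_nil hl
    rw [minEntry, List.cons_append, List.headD_cons, ← List.cons_append, List.foldr_append,
      foldr_min_eq_of_forall_le (hlt a List.mem_cons_self)]
    rfl
  have hidx : minIndex (l ++ t) = minIndex l := by
    rw [minIndex, hmin, List.idxOf_append_of_mem (minEntry_mem hl), minIndex]
  have hlen := minIndex_lt_length hl
  rw [splitAll_eq, hmin, hidx, List.take_append_of_le_length hlen.le,
    List.drop_append_of_le_length hlen]

lemma splitAll_cons_of_forall_le {a : ℕ} {t : List ℕ} (h : ∀ y ∈ t, a ≤ y) :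
    splitAll (a :: t) = [[a], t] := by
  rw [← List.singleton_append, splitAll_append (List.cons_ne_nil a []) (by simpa using h)]
  simp [minIndex, minEntry, splitLeft, splitLeftAux]

end Splitting

section Weight

lemma weightAux_of_sorted (f : ℕ) {l : List ℕ} (h : l.Pairwise (· < ·)) :
    weightAux f l = 0 := by
  cases f <;> simp [weightAux, h]

lemma weightAux_succ_of_not_sorted (f : ℕ) {l : List ℕ} (h : ¬ l.Pairwise (· < ·)) :
    weightAux (f + 1) l =
      ((splitAll (l ++ [l.foldr Nat.max 0 + 1])).map fun p => desL p + weightAux f p).sum := by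
  rw [weightAux, if_neg]
  rintro (hl | hl)
  · exact h (List.pairwise_of_length_le_one hl)
  · exact h hl

end Weight

section Shift

variable (k : ℕ)

lemma splitLeftAux_map_add (f : ℕ) (l : List ℕ) :
    splitLeftAux f (l.map (· + k)) = (splitLeftAux f l).map (List.map (· + k)) := by
  induction f generalizing l with
  | zero => rfl
  | succ f ih =>
    rcases eq_or_ne l [] with rfl | hl
    · rfl
    rw [splitLeftAux_succ hl, splitLeftAux_succ (by simpa using hl), foldr_max_map_add k hl,
      idxOf_map_of_injective (add_left_injective k), ← List.map_take, ← List.map_drop, ih,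
      List.map_cons]

lemma splitLeft_map_add (l : List ℕ) :
    splitLeft (l.map (· + k)) = (splitLeft l).map (List.map (· + k)) := by
  rw [splitLeft, splitLeft, List.length_map, splitLeftAux_map_add]

lemma minEntry_map_add {l : List ℕ} (hl : l ≠ []) :
    minEntry (l.map (· + k)) = minEntry l + k := by
  obtain ⟨a, t, rfl⟩ := List.exists_cons_of_ne_nil hl
  exact foldr_min_map_add k a _

lemma minIndex_map_add {l : List ℕ} (hl : l ≠ []) :
    minIndex (l.map (· + k)) = minIndex l := by
  rw [minIndex, minEntry_map_add k hl, idxOf_map_of_injective (add_left_injective k), minIndex]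

lemma splitAll_map_add {l : List ℕ} (hl : l ≠ []) :
    splitAll (l.map (· + k)) = (splitAll l).map (List.map (· + k)) := by
  rw [splitAll_eq, splitAll_eq, minEntry_map_add k hl, minIndex_map_add k hl, ← List.map_take,
    ← List.map_drop, splitLeft_map_add]
  simp

lemma weightAux_map_add (f : ℕ) (l : List ℕ) :
    weightAux f (l.map (· + k)) = weightAux f l := by
  induction f generalizing l with
  | zero => rfl
  | succ f ih =>
    have hsorted : (l.map (· + k)).Pairwise (· < ·) ↔ l.Pairwise (· < ·) := by
      simp [List.pairwise_map]
    by_cases hl : l.Pairwise (· < ·)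
    · rw [weightAux_of_sorted _ hl, weightAux_of_sorted _ (hsorted.2 hl)]
    have hne : l ≠ [] := by rintro rfl; exact hl .nil
    rw [weightAux_succ_of_not_sorted _ hl, weightAux_succ_of_not_sorted _ (hsorted.not.2 hl),
      foldr_max_map_add k hne, Nat.add_right_comm,
      show ∀ x, l.map (· + k) ++ [x + k] = (l ++ [x]).map (· + k) by simp,
      splitAll_map_add k (by simp), List.map_map]
    simp only [Function.comp_def, desL_map_add, ih]

lemma weightL_map_add (l : List ℕ) : weightL (l.map (· + k)) = weightL l := by
  rw [weightL, weightL, List.length_map, weightAux_map_add]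

end Shift

section SortedAbove

def SortedAbove (l s : List ℕ) : Prop := s.Pairwise (· < ·) ∧ ∀ x ∈ l, ∀ y ∈ s, x < y

lemma SortedAbove.nil (l : List ℕ) : SortedAbove l [] := ⟨.nil, by simp⟩

lemma SortedAbove.mono {l l' s : List ℕ} (h : SortedAbove l s) (hl : l' ⊆ l) :
    SortedAbove l' s :=
  ⟨h.1, fun x hx => h.2 x (hl hx)⟩

lemma SortedAbove.append_max_succ {l s : List ℕ} (h : SortedAbove l s) :
    SortedAbove l (s ++ [(l ++ s).foldr Nat.max 0 + 1]) := by
  refine ⟨List.pairwise_append.2 ⟨h.1, List.pairwise_singleton _ _, ?_⟩, ?_⟩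
  · simp only [List.mem_singleton]
    rintro x hx _ rfl
    exact lt_foldr_max_succ (List.mem_append_right l hx)
  · simp only [List.mem_append, List.mem_singleton]
    rintro x hx y (hy | rfl)
    · exact h.2 x hx y hy
    · exact lt_foldr_max_succ (List.mem_append_left s hx)

lemma weightAux_succ_append {l s : List ℕ} (h : SortedAbove l s) (hl : ¬ l.Pairwise (· < ·))
    (g : ℕ) :
    weightAux (g + 1) (l ++ s) =
      ((splitLeft (l.take (minIndex l)) ++ [[minEntry l]]).map
          fun p => desL p + weightAux g p).sum +
        (desL (l.drop (minIndex l + 1)) +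
          weightAux g (l.drop (minIndex l + 1) ++ (s ++ [(l ++ s).foldr Nat.max 0 + 1]))) := by
  have hM := h.append_max_succ
  have hne : l ≠ [] := by rintro rfl; exact hl .nil
  rw [weightAux_succ_of_not_sorted _ fun h' => hl (List.pairwise_append.1 h').1, List.append_assoc,
    splitAll_append hne fun x hx y hy => (hM.2 x hx y hy).le, List.map_append, List.sum_append,
    List.map_singleton, List.sum_singleton,
    desL_append fun x hx y hy => (hM.2 x (List.mem_of_mem_drop hx) y hy).le,
    desL_eq_zero_of_sorted hM.1, add_zero]

theorem weightAux_append_eq {l s₁ s₂ : List ℕ} {f₁ f₂ : ℕ} (hf₁ : l.length < f₁)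
    (hf₂ : l.length < f₂) (h₁ : SortedAbove l s₁) (h₂ : SortedAbove l s₂) :
    weightAux f₁ (l ++ s₁) = weightAux f₂ (l ++ s₂) := by
  by_cases hl : l.Pairwise (· < ·)
  · rw [weightAux_of_sorted _ (List.pairwise_append.2 ⟨hl, h₁⟩),
      weightAux_of_sorted _ (List.pairwise_append.2 ⟨hl, h₂⟩)]
  obtain ⟨g₁, rfl⟩ : ∃ g, f₁ = g + 1 := ⟨f₁ - 1, by omega⟩
  obtain ⟨g₂, rfl⟩ : ∃ g, f₂ = g + 1 := ⟨f₂ - 1, by omega⟩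
  have hlen : 2 ≤ l.length := by
    by_contra h
    exact hl (List.pairwise_of_length_le_one (by omega))
  rw [weightAux_succ_append h₁ hl, weightAux_succ_append h₂ hl]
  congr 1
  · congr 1
    refine List.map_congr_left fun p hp => ?_
    have hp := length_lt_of_mem_splitLeft_append_minEntry hlen hp
    congr 1
    simpa using weightAux_append_eq (l := p) (f₁ := g₁) (f₂ := g₂) (by omega) (by omega)
      (.nil p) (.nil p)
  · have hR : (l.drop (minIndex l + 1)).length < l.length := by rw [List.length_drop]; omega
    rw [weightAux_append_eq (f₁ := g₁) (f₂ := g₂) (by omega) (by omega)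
      (h₁.append_max_succ.mono (List.drop_subset _ _))
      (h₂.append_max_succ.mono (List.drop_subset _ _))]
termination_by l.length

lemma weightAux_append_eq_weightL {l s : List ℕ} {f : ℕ} (hf : l.length < f)
    (h : SortedAbove l s) :
    weightAux f (l ++ s) = weightL l := by
  have hfuel : l.length < (l.length + 2) ^ 2 := by nlinarith
  simpa [weightL] using weightAux_append_eq hf hfuel h (.nil l)

lemma weightL_cons_of_forall_le {a : ℕ} {t : List ℕ} (h : ∀ y ∈ t, a ≤ y) :
    weightL (a :: t) = weightL t + desL t := by
  by_cases hs : (a :: t).Pairwise (· < ·)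
  · have ht := (List.pairwise_cons.1 hs).2
    rw [weightL, weightL, weightAux_of_sorted _ hs, weightAux_of_sorted _ ht,
      desL_eq_zero_of_sorted ht]
  set M := (a :: t).foldr Nat.max 0 + 1
  have hM : SortedAbove t [M] := by
    refine ⟨List.pairwise_singleton _ _, ?_⟩
    simp only [List.mem_singleton]
    rintro x hx _ rfl
    exact lt_foldr_max_succ (List.mem_cons_of_mem a hx)
  have haM : ∀ y ∈ t ++ [M], a ≤ y := by
    simp only [List.mem_append, List.mem_singleton]
    rintro y (hy | rfl)
    · exact h y hy
    · exact (lt_foldr_max_succ List.mem_cons_self).le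
  rw [← weightAux_append_eq_weightL (l := a :: t) (f := t.length + 1 + 1) (by simp) (.nil _),
    List.append_nil, weightAux_succ_of_not_sorted _ hs, List.cons_append,
    splitAll_cons_of_forall_le haM]
  simp only [List.map_cons, List.map_nil, List.sum_cons, List.sum_nil, desL_singleton,
    weightAux_of_sorted _ (List.pairwise_singleton _ a),
    desL_append fun x hx y hy => (hM.2 x hx y hy).le,
    weightAux_append_eq_weightL (lt_add_one _) hM]
  omega

end SortedAbove

theorem weight_prepend_one_general (d : ℕ) (π : List ℕ)
    (hd : desL π = d) :
    desL (1 :: π.map (· + 1)) = d ∧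
      weightL (1 :: π.map (· + 1)) = weightL π + d := by
  have hle : ∀ y ∈ π.map (· + 1), 1 ≤ y := by simp
  rw [desL_cons_of_forall_le hle, weightL_cons_of_forall_le hle, desL_map_add, weightL_map_add, hd]
  exact ⟨rfl, rfl⟩

/-- Prepending `1` (after shifting all entries up by `1`) to a permutation `π`
of `[m]` with `d` descents yields a permutation with `d` descents and weight
`w(π) + d`. -/
theorem weight_prepend_one (m d : ℕ) (π : List ℕ) (hperm : IsPermList m π)
    (hd : desL π = d) :
    desL (1 :: π.map (· + 1)) = d ∧
      weightL (1 :: π.map (· + 1)) = weightL π + d :=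
  weight_prepend_one_general d π hd
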